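/- arXiv:2404.13731 — 2 statements merged into one kernel-verified Lean document; each statement's English description precedes it below -/
import Mathlib

section
/- Under uniform stability with constant c_{n−1} and the bi-Lipschitz parametrization with constants κ₁ > 0 and κ₂ < ∞, the maximum over i ∈ [n] of ‖μ_{β̂₋ᵢ} − μ_{β̄₋₁}‖_∞ satisfies, for every ε > 0, P( max_i ‖μ_{β̂₋ᵢ} − μ_{β̄₋₁}‖_∞ ≥ ε ) ≤ 2p·exp( −(2κ₁²/n)·( ε/(κ₂ c_{n−1}) − 1/κ₁ )² ), provided ε/(κ₂ c_{n−1}) ≥ 1/κ₁. -/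
/-!
Stability and the lower Lipschitz bound make `T` a function of bounded differences `c / κ₁`;
since `T` is symmetric, every leave-one-out estimate `β̂₋ᵢ` is then within `c / κ₁` of `β̂₋₁`.
Hence `‖μ_{β̂₋ᵢ} - μ_{β̄₋₁}‖ ≤ κ₂ (c / κ₁ + ‖β̂₋₁ - β̄₋₁‖)` for all `i`, and the event forces
some coordinate of `β̂₋₁` to deviate from its mean by at least `ε / κ₂ - c / κ₁`. McDiarmid's
inequality, obtained from Hoeffding's lemma by peeling off one coordinate at a time with
Fubini, bounds each of the `p` coordinates.
-/

open MeasureTheory ProbabilityTheory BoundedContinuousFunction Real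
open scoped NNReal

def HasBoundedDifferences {ι Z E : Type*} [PseudoMetricSpace E] (f : (ι → Z) → E) (d : ℝ) :
    Prop :=
  ∀ (i : ι) (z z' : ι → Z), (∀ j, j ≠ i → z j = z' j) → dist (f z) (f z') ≤ d

namespace HasBoundedDifferences

variable {ι Z E : Type*} [PseudoMetricSpace E] {d : ℝ}

lemma apply {κ : Type*} [Fintype κ] {f : (ι → Z) → κ → E}
    (hf : HasBoundedDifferences f d) (k : κ) : HasBoundedDifferences (fun z => f z k) d :=
  fun i z z' h => (dist_le_pi_dist (f z) (f z') k).trans (hf i z z' h)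

lemma of_comp {F : Type*} [PseudoMetricSpace F] {f : (ι → Z) → E}
    {g : E → F} {K : ℝ} (hK : 0 < K) (hg : ∀ a b, K * dist a b ≤ dist (g a) (g b))
    (hf : HasBoundedDifferences (g ∘ f) d) : HasBoundedDifferences f (d / K) :=
  fun i z z' h => (le_div_iff₀' hK).2 ((hg _ _).trans (hf i z z' h))

lemma comp_insertNth {n : ℕ} {f : (Fin (n + 1) → Z) → E}
    (hf : HasBoundedDifferences f d) (p : Fin (n + 1)) (x : Z) :
    HasBoundedDifferences (fun y => f (Fin.insertNth p x y)) d := by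
  intro k y y' h
  apply hf (p.succAbove k)
  intro j hj
  induction j using Fin.succAboveCases p with
  | x => simp
  | p l =>
    simp only [Fin.insertNth_apply_succAbove]
    exact h l (fun hl => hj (congrArg _ hl))

lemma dist_insertNth_le {n : ℕ} {f : (Fin (n + 1) → Z) → E}
    (hf : HasBoundedDifferences f d) (p : Fin (n + 1)) (x x' : Z) (y : Fin n → Z) :
    dist (f (Fin.insertNth p x y)) (f (Fin.insertNth p x' y)) ≤ d := by
  apply hf p
  intro j hj
  obtain ⟨l, rfl⟩ := Fin.exists_succAbove_eq hj
  simp only [Fin.insertNth_apply_succAbove]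

lemma dist_comp_succAbove_le {m : ℕ} {f : (Fin m → Z) → E}
    (hf : HasBoundedDifferences f d) (hd : 0 ≤ d)
    (hsym : ∀ (σ : Equiv.Perm (Fin m)) (z : Fin m → Z), f (z ∘ σ) = f z)
    (z : Fin (m + 1) → Z) (i : Fin (m + 1)) :
    dist (f (z ∘ i.succAbove)) (f (z ∘ (0 : Fin (m + 1)).succAbove)) ≤ d := by
  induction i using Fin.cases with
  | zero => simpa using hd
  | succ l =>
    -- reordered by `l.cycleRange`, `z ∘ l.succ.succAbove` agrees with `z ∘ Fin.succ` off `l`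
    rw [← hsym l.cycleRange]
    apply hf l
    intro k hk
    simp only [Function.comp_apply, Fin.succAbove_cycleRange, Fin.succAbove_zero]
    rw [Equiv.swap_apply_of_ne_of_ne (Fin.succ_ne_zero k) ((Fin.succ_injective _).ne hk)]

lemma iSup_dist_comp_succAbove_le {m : ℕ} {F : Type*} [PseudoMetricSpace F]
    {f : (Fin m → Z) → E} (hf : HasBoundedDifferences f d) (hd : 0 ≤ d)
    (hsym : ∀ (σ : Equiv.Perm (Fin m)) (z : Fin m → Z), f (z ∘ σ) = f z)
    {g : E → F} {K : ℝ} (hK : 0 ≤ K) (hg : ∀ a b, dist (g a) (g b) ≤ K * dist a b)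
    (z : Fin (m + 1) → Z) (b : E) :
    ⨆ i : Fin (m + 1), dist (g (f (z ∘ i.succAbove))) (g b)
      ≤ K * (d + dist (f (z ∘ (0 : Fin (m + 1)).succAbove)) b) :=
  ciSup_le fun i => (hg _ _).trans <| mul_le_mul_of_nonneg_left
    ((dist_triangle _ _ _).trans (add_le_add (hf.dist_comp_succAbove_le hd hsym z i) le_rfl)) hK

lemma integral {α : Type*} [MeasurableSpace α] {μ : Measure α} [IsProbabilityMeasure μ]
    {G : α → (ι → Z) → ℝ} (hG : ∀ x, HasBoundedDifferences (G x) d)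
    (hint : ∀ y, Integrable (fun x => G x y) μ) :
    HasBoundedDifferences (fun y => ∫ x, G x y ∂μ) d := by
  intro i y y' h
  have hbound : ∀ x, ‖G x y - G x y'‖ ≤ d := fun x => hG x i y y' h
  rw [Real.dist_eq, ← integral_sub (hint y) (hint y')]
  simpa using norm_integral_le_of_norm_le_const (μ := μ) (ae_of_all _ hbound)

end HasBoundedDifferences

namespace ProbabilityTheory.HasSubgaussianMGF

variable {α : Type*} [MeasurableSpace α] {μ : Measure α} {X : α → ℝ} {c : ℝ≥0}

lemma mono (h : HasSubgaussianMGF X c μ) {c' : ℝ≥0} (hc : c ≤ c') :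
    HasSubgaussianMGF X c' μ where
  integrable_exp_mul := h.integrable_exp_mul
  mgf_le t := (h.mgf_le t).trans (exp_le_exp.2 (by gcongr))

lemma measureReal_abs_ge_le [IsFiniteMeasure μ] (h : HasSubgaussianMGF X c μ) {ε : ℝ}
    (hε : 0 ≤ ε) : μ.real {ω | ε ≤ |X ω|} ≤ 2 * exp (-ε ^ 2 / (2 * c)) := by
  have hsplit : {ω | ε ≤ |X ω|} ⊆ {ω | ε ≤ X ω} ∪ {ω | ε ≤ (-X) ω} := by
    intro ω hω
    rcases le_abs'.1 (show ε ≤ |X ω| from hω) with hneg | hpos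
    · exact Or.inr (show ε ≤ -X ω by linarith)
    · exact Or.inl hpos
  calc μ.real {ω | ε ≤ |X ω|}
      ≤ μ.real {ω | ε ≤ X ω} + μ.real {ω | ε ≤ (-X) ω} :=
        (measureReal_mono hsplit).trans (measureReal_union_le _ _)
    _ ≤ exp (-ε ^ 2 / (2 * c)) + exp (-ε ^ 2 / (2 * c)) :=
        add_le_add (h.measure_ge_le hε) (h.neg.measure_ge_le hε)
    _ = 2 * exp (-ε ^ 2 / (2 * c)) := by ring

lemma add_prod {β : Type*} [MeasurableSpace β] {ν : Measure β} [SFinite μ] [SFinite ν]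
    {X : α × β → ℝ} {Y : β → ℝ} {cX cY : ℝ≥0} (hXm : Measurable X) (hYm : Measurable Y)
    (hX : ∀ y, HasSubgaussianMGF (fun x => X (x, y)) cX μ) (hY : HasSubgaussianMGF Y cY ν) :
    HasSubgaussianMGF (fun q => X q + Y q.2) (cX + cY) (μ.prod ν) := by
  have hfactor : ∀ (t : ℝ) (q : α × β), exp (t * (X q + Y q.2)) = exp (t * X q) * exp (t * Y q.2) :=
    fun t q => by rw [mul_add, exp_add]
  have hinner : ∀ t y, ∫ x, exp (t * (X (x, y) + Y y)) ∂μ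
      = mgf (fun x => X (x, y)) μ t * exp (t * Y y) := fun t y => by
    simp only [hfactor, mgf, integral_mul_const]
  have hinner_le : ∀ t y, ∫ x, exp (t * (X (x, y) + Y y)) ∂μ
      ≤ exp (cX * t ^ 2 / 2) * exp (t * Y y) := fun t y => by
    rw [hinner]
    exact mul_le_mul_of_nonneg_right ((hX y).mgf_le t) (exp_pos _).le
  have hmeas : ∀ t : ℝ, Measurable fun q : α × β => exp (t * (X q + Y q.2)) :=
    fun t => by fun_prop
  have hint : ∀ t, Integrable (fun q => exp (t * (X q + Y q.2))) (μ.prod ν) := by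
    intro t
    refine (integrable_prod_iff' (hmeas t).aestronglyMeasurable).2 ⟨ae_of_all _ fun y => ?_, ?_⟩
    · simpa only [hfactor] using ((hX y).integrable_exp_mul t).mul_const (exp (t * Y y))
    · refine ((hY.integrable_exp_mul t).const_mul (exp (cX * t ^ 2 / 2))).mono'
        ((hmeas t).norm.stronglyMeasurable.integral_prod_left').aestronglyMeasurable
        (ae_of_all _ fun y => ?_)
      simp only [Real.norm_eq_abs, abs_exp]
      rw [abs_of_nonneg (integral_nonneg fun _ => (exp_pos _).le)]
      exact hinner_le t y
  refine ⟨hint, fun t => ?_⟩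
  calc mgf (fun q => X q + Y q.2) (μ.prod ν) t
      = ∫ y, ∫ x, exp (t * (X (x, y) + Y y)) ∂μ ∂ν := integral_prod_symm _ (hint t)
    _ ≤ ∫ y, exp (cX * t ^ 2 / 2) * exp (t * Y y) ∂ν :=
        integral_mono_of_nonneg (ae_of_all _ fun _ => integral_nonneg fun _ => (exp_pos _).le)
          ((hY.integrable_exp_mul t).const_mul _) (ae_of_all _ (hinner_le t))
    _ = exp (cX * t ^ 2 / 2) * mgf Y ν t := integral_const_mul _ _
    _ ≤ exp (cX * t ^ 2 / 2) * exp (cY * t ^ 2 / 2) :=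
        mul_le_mul_of_nonneg_left (hY.mgf_le t) (exp_pos _).le
    _ = exp ((cX + cY : ℝ≥0) * t ^ 2 / 2) := by rw [← exp_add]; push_cast; ring_nf

end ProbabilityTheory.HasSubgaussianMGF

lemma hasSubgaussianMGF_sub_integral_of_dist_le {α : Type*} [MeasurableSpace α] {μ : Measure α}
    [IsProbabilityMeasure μ] {X : α → ℝ} (hX : Measurable X) {d : ℝ}
    (hd : ∀ x x', dist (X x) (X x') ≤ d) :
    HasSubgaussianMGF (fun x => X x - ∫ x, X x ∂μ) ((‖d‖₊ / 2) ^ 2) μ := by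
  have hne := nonempty_of_isProbabilityMeasure μ
  have hbdd : BddBelow (Set.range X) :=
    ⟨X hne.some - d, by rintro _ ⟨x, rfl⟩; linarith [abs_le.1 (Real.dist_eq _ _ ▸ hd hne.some x)]⟩
  have hmem : ∀ x, X x ∈ Set.Icc (⨅ x, X x) ((⨅ x, X x) + d) := fun x =>
    ⟨ciInf_le hbdd x, by
      have : X x - d ≤ ⨅ x, X x :=
        le_ciInf fun x' => by linarith [abs_le.1 (Real.dist_eq _ _ ▸ hd x x')]
      linarith⟩
  simpa using hasSubgaussianMGF_of_mem_Icc hX.aemeasurable (ae_of_all μ hmem)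

lemma HasBoundedDifferences.hasSubgaussianMGF_pi {Z : Type*} [MeasurableSpace Z] {ν : Measure Z}
    [IsProbabilityMeasure ν] {d : ℝ} {m : ℕ} {f : (Fin m → Z) → ℝ} (hf : Measurable f)
    (hbd : HasBoundedDifferences f d) :
    HasSubgaussianMGF (fun z => f z - ∫ w, f w ∂Measure.pi fun _ => ν) (m * (‖d‖₊ / 2) ^ 2)
      (Measure.pi fun _ => ν) := by
  induction m with
  | zero => simp [Subsingleton.elim _ (isEmptyElim : Fin 0 → Z)]
  | succ n ih =>
    set P := Measure.pi fun _ : Fin n => ν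
    set e := MeasurableEquiv.piFinSuccAbove (fun _ : Fin (n + 1) => Z) 0
    have he : MeasurePreserving e (Measure.pi fun _ => ν) (ν.prod P) :=
      measurePreserving_piFinSuccAbove (fun _ => ν) 0
    set F : Z × (Fin n → Z) → ℝ := fun q => f (e.symm q)
    have hF : Measurable F := hf.comp e.symm.measurable
    set g : (Fin n → Z) → ℝ := fun y => ∫ x, F (x, y) ∂ν
    have hg : Measurable g := hF.stronglyMeasurable.integral_prod_left'.measurable
    have hfiber : ∀ y, HasSubgaussianMGF (fun x => F (x, y) - g y) ((‖d‖₊ / 2) ^ 2) ν :=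
      fun y => hasSubgaussianMGF_sub_integral_of_dist_le (hF.comp measurable_prodMk_right)
        fun x x' => hbd.dist_insertNth_le 0 x x' y
    have hgbd : HasBoundedDifferences g d :=
      HasBoundedDifferences.integral (fun x => hbd.comp_insertNth 0 x)
        fun y => integrable_add_const_iff.1 <| by
          simpa only [sub_eq_add_neg] using (hfiber y).integrable
    have hsum : HasSubgaussianMGF (fun q => F q - ∫ y, g y ∂P)
        ((‖d‖₊ / 2) ^ 2 + n * (‖d‖₊ / 2) ^ 2) (ν.prod P) := by
      simpa using HasSubgaussianMGF.add_prod (X := fun q => F q - g q.2)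
        (hF.sub (hg.comp measurable_snd)) (hg.sub_const _) hfiber (ih hg hgbd)
    have hmean : ∫ z, f z ∂(Measure.pi fun _ => ν) = ∫ y, g y ∂P := by
      have hFint : Integrable F (ν.prod P) :=
        integrable_add_const_iff.1 (by simpa only [sub_eq_add_neg] using hsum.integrable)
      rw [← he.symm.integral_comp e.symm.measurableEmbedding]
      exact integral_prod_symm F hFint
    rw [← he.map_eq] at hsum
    convert hsum.of_map e.measurable.aemeasurable using 1
    · ext z
      simp [F, hmean]
    · push_cast
      ring

lemma exists_le_abs_apply_of_le_norm {ι : Type*} [Fintype ι] [Nonempty ι] {v : ι → ℝ} {t : ℝ}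
    (h : t ≤ ‖v‖) : ∃ j, t ≤ |v j| := by
  obtain ⟨j, hj⟩ := (IsGreatest.pi_norm v).1
  exact ⟨j, h.trans_eq (hj.symm.trans (Real.norm_eq_abs _))⟩

lemma measureReal_le_card_mul_of_subset_iUnion {Ω ι : Type*} [MeasurableSpace Ω] [Fintype ι]
    {P : Measure Ω} [IsFiniteMeasure P] {s : Set Ω} {A : ι → Set Ω} (hs : s ⊆ ⋃ j, A j)
    {r : ℝ} (hA : ∀ j, P.real (A j) ≤ r) : P.real s ≤ Fintype.card ι * r :=
  (measureReal_mono hs).trans <| (measureReal_iUnion_fintype_le A).trans <|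
    (Finset.sum_le_sum fun j _ => hA j).trans_eq (by simp)

lemma ProbabilityTheory.iIndepFun.map_comp_eq_pi {Ω ι ι' Z : Type*} [MeasurableSpace Ω]
    [MeasurableSpace Z] [Fintype ι'] {P : Measure Ω} [IsProbabilityMeasure P] {f : ι → Ω → Z}
    (hf : ∀ i, Measurable (f i)) (hindep : iIndepFun f P) {g : ι' → ι} (hg : g.Injective)
    {i₀ : ι} (hident : ∀ i, P.map (f i) = P.map (f i₀)) :
    P.map (fun ω k => f (g k) ω) = Measure.pi fun _ => P.map (f i₀) := by
  rw [(hindep.precomp hg).map_fun_eq_pi_map fun k => (hf _).aemeasurable]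
  simp only [hident]

lemma HasBoundedDifferences.measureReal_abs_sub_integral_ge_le {Ω Z : Type*} [MeasurableSpace Ω]
    [MeasurableSpace Z] {P : Measure Ω} [IsProbabilityMeasure P] {ν : Measure Z}
    [IsProbabilityMeasure ν] {m : ℕ} {W : Ω → Fin m → Z} (hW : Measurable W)
    (hlaw : P.map W = Measure.pi fun _ => ν) {f : (Fin m → Z) → ℝ} (hf : Measurable f) {d : ℝ}
    (hbd : HasBoundedDifferences f d) {c : ℝ≥0} (hc : m * (‖d‖₊ / 2) ^ 2 ≤ c) {t : ℝ}
    (ht : 0 ≤ t) :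
    P.real {ω | t ≤ |f (W ω) - ∫ ω, f (W ω) ∂P|} ≤ 2 * exp (-t ^ 2 / (2 * c)) := by
  have h := hbd.hasSubgaussianMGF_pi (ν := ν) hf
  rw [← hlaw, integral_map hW.aemeasurable hf.aestronglyMeasurable] at h
  exact ((h.of_map hW.aemeasurable).mono hc).measureReal_abs_ge_le ht

-- Here `n = m + 1` and `c = c_{n-1}`; the point with index `0` is the one left out of `β̂₋₁`.
theorem stmt2_general {Ω : Type*} [MeasureSpace Ω] [IsProbabilityMeasure (ℙ : Measure Ω)]
    {Z : Type*} [MeasurableSpace Z] {X : Type*} [TopologicalSpace X]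
    (m p : ℕ) (hp : 0 < p)
    (c κ₁ κ₂ : ℝ) (hc : 0 < c) (hκ₁ : 0 < κ₁) (hκ₂ : 0 < κ₂)
    (μ : (Fin p → ℝ) → (X →ᵇ ℝ))
    (T : (Fin m → Z) → (Fin p → ℝ)) (hT : Measurable T)
    (hsym : ∀ (σ : Equiv.Perm (Fin m)) (z : Fin m → Z), T (z ∘ σ) = T z)
    (hstab : ∀ (i : Fin m) (z z' : Fin m → Z), (∀ j, j ≠ i → z j = z' j) →
      ‖μ (T z) - μ (T z')‖ ≤ c)
    (hbilip : ∀ β β' : Fin p → ℝ,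
      κ₁ * ‖β - β'‖ ≤ ‖μ β - μ β'‖ ∧ ‖μ β - μ β'‖ ≤ κ₂ * ‖β - β'‖)
    (Zs : Fin (m + 1) → Ω → Z) (hmeas : ∀ i, Measurable (Zs i))
    (hindep : iIndepFun Zs ℙ)
    (hident : ∀ i, Measure.map (Zs i) ℙ = Measure.map (Zs 0) ℙ)
    (ε : ℝ) (hεbig : 1 / κ₁ ≤ ε / (κ₂ * c)) :
    (ℙ {ω | ε ≤ ⨆ i : Fin (m + 1),
        ‖μ (T (fun k => Zs (i.succAbove k) ω)) -
          μ (fun j => ∫ ω', T (fun k => Zs ((0 : Fin (m + 1)).succAbove k) ω') j ∂ℙ)‖}).toReal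
      ≤ 2 * p * Real.exp (-(2 * κ₁ ^ 2 / (m + 1)) * (ε / (κ₂ * c) - 1 / κ₁) ^ 2) := by
  set W : Ω → Fin m → Z := fun ω k => Zs ((0 : Fin (m + 1)).succAbove k) ω
  set b : Fin p → ℝ := fun j => ∫ ω', T (W ω') j ∂ℙ
  set d := c / κ₁
  set t := ε / κ₂ - d
  set s := ε / (κ₂ * c) - 1 / κ₁
  have hd : 0 ≤ d := by positivity
  have hts : t = c * s := by
    simp only [t, d, s]
    field_simp
  have hTbd : HasBoundedDifferences T d :=
    HasBoundedDifferences.of_comp (g := μ) hκ₁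
      (fun β β' => by simpa only [dist_eq_norm] using (hbilip β β').1)
      fun i z z' h => by simpa only [dist_eq_norm, Function.comp_apply] using hstab i z z' h
  have hsub : {ω | ε ≤ ⨆ i : Fin (m + 1), ‖μ (T (fun k => Zs (i.succAbove k) ω)) - μ b‖}
      ⊆ ⋃ j, {ω | t ≤ |T (W ω) j - b j|} := by
    intro ω hω
    have hsup := hTbd.iSup_dist_comp_succAbove_le (g := μ) hd hsym hκ₂.le
      (fun β β' => by simpa only [dist_eq_norm] using (hbilip β β').2) (fun j => Zs j ω) b
    simp only [dist_eq_norm] at hsup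
    have hnorm : ε / κ₂ ≤ d + ‖T (W ω) - b‖ := (div_le_iff₀' hκ₂).2 (hω.trans hsup)
    have : Nonempty (Fin p) := ⟨⟨0, hp⟩⟩
    exact Set.mem_iUnion.2 (exists_le_abs_apply_of_le_norm (v := T (W ω) - b) (by linarith))
  have hWm : Measurable W := measurable_pi_lambda _ fun k => hmeas _
  have hlaw := hindep.map_comp_eq_pi hmeas (Fin.succAbove_right_injective (p := 0)) hident
  have := Measure.isProbabilityMeasure_map (hmeas 0).aemeasurable (μ := ℙ)
  have htail : ∀ j, Measure.real ℙ {ω | t ≤ |T (W ω) j - b j|}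
      ≤ 2 * Real.exp (-(2 * κ₁ ^ 2 / (m + 1)) * s ^ 2) := by
    intro j
    convert (hTbd.apply j).measureReal_abs_sub_integral_ge_le hWm hlaw (by fun_prop)
      (c := (m + 1) * (‖d‖₊ / 2) ^ 2) (by gcongr; exact le_self_add)
      (hts ▸ mul_nonneg hc.le (sub_nonneg.2 hεbig)) using 3
    rw [hts]
    push_cast
    rw [Real.norm_of_nonneg hd]
    simp only [d]
    field_simp
  calc Measure.real ℙ {ω | ε ≤ ⨆ i : Fin (m + 1), ‖μ (T (fun k => Zs (i.succAbove k) ω)) - μ b‖}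
      ≤ Fintype.card (Fin p) * (2 * Real.exp (-(2 * κ₁ ^ 2 / (m + 1)) * s ^ 2)) :=
        measureReal_le_card_mul_of_subset_iUnion hsub htail
    _ = _ := by
      rw [Fintype.card_fin]
      ring

/-- Lemma 2 (concentration of the leave-one-out predictors): under uniform
stability and a bi-Lipschitz parametrization, for i.i.d. data
`P(max_i ‖μ_{β̂₋ᵢ} − μ_{β̄₋₁}‖_∞ ≥ ε) ≤ 2p exp(−(2κ₁²/n)(ε/(κ₂ c_{n−1}) − 1/κ₁)²)`.
The dataset has `m + 1` points (so `n = m + 1`) and `T` trains on `m` points,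
with `c` playing the role of `c_{n−1}`. -/
theorem stmt2 {Ω : Type*} [MeasureSpace Ω] [IsProbabilityMeasure (ℙ : Measure Ω)]
    {Z : Type*} [MeasurableSpace Z] {X : Type*} [TopologicalSpace X]
    (m p : ℕ) (hp : 0 < p)
    (c κ₁ κ₂ : ℝ) (hc : 0 < c) (hκ₁ : 0 < κ₁) (hκ₂ : 0 < κ₂)
    (μ : (Fin p → ℝ) → (X →ᵇ ℝ))
    (T : (Fin m → Z) → (Fin p → ℝ)) (hT : Measurable T)
    (hsym : ∀ (σ : Equiv.Perm (Fin m)) (z : Fin m → Z), T (z ∘ σ) = T z)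
    (hstab : ∀ (i : Fin m) (z z' : Fin m → Z), (∀ j, j ≠ i → z j = z' j) →
      ‖μ (T z) - μ (T z')‖ ≤ c)
    (hbilip : ∀ β β' : Fin p → ℝ,
      κ₁ * ‖β - β'‖ ≤ ‖μ β - μ β'‖ ∧ ‖μ β - μ β'‖ ≤ κ₂ * ‖β - β'‖)
    (Zs : Fin (m + 1) → Ω → Z) (hmeas : ∀ i, Measurable (Zs i))
    (hindep : iIndepFun Zs ℙ)
    (hident : ∀ i, Measure.map (Zs i) ℙ = Measure.map (Zs 0) ℙ)
    (ε : ℝ) (hε : 0 < ε) (hεbig : 1 / κ₁ ≤ ε / (κ₂ * c)) :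
    (ℙ {ω | ε ≤ ⨆ i : Fin (m + 1),
        ‖μ (T (fun k => Zs (i.succAbove k) ω)) -
          μ (fun j => ∫ ω', T (fun k => Zs ((0 : Fin (m + 1)).succAbove k) ω') j ∂ℙ)‖}).toReal
      ≤ 2 * p * Real.exp (-(2 * κ₁ ^ 2 / (m + 1)) * (ε / (κ₂ * c) - 1 / κ₁) ^ 2) :=
  stmt2_general m p hp c κ₁ κ₂ hc hκ₁ hκ₂ μ T hT hsym hstab hbilip Zs hmeas hindep hident ε hεbig
end

section
/- For the full-conformal region with a uniformly stable algorithm: if ‖μ_{β̂_{x,y}} − μ_{β̂ₙ}‖_∞ ≤ c_{n+1}/2 for all (x,y) (one-point-addition stability), then Ĉ_α(x) ⊇ {y ∈ ℝ : (1/n)·#{i : |Yᵢ − μ_{β̂ₙ}(Xᵢ)| ≥ |y − μ_{β̂ₙ}(x)| + c_{n+1}} > α}, where Ĉ_α(x) = {y : (1/n)·#{i : |Yᵢ − μ_{β̂_{x,y}}(Xᵢ)| ≥ |y − μ_{β̂_{x,y}}(x)|} > α}. -/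
/-!
Moving both fitted values by at most `c/2` changes each residual by at most `c/2`, so a training
residual that beats the test residual by the margin `c` under `μ_{β̂ₙ}` still dominates it under
`μ_{β̂_{x,y}}`. Every index counted on the left is thus counted on the right.
-/

open BoundedContinuousFunction

theorem abs_sub_le_abs_sub_of_add_le {y p p' z q q' r : ℝ} (hp : |p' - p| ≤ r)
    (hq : |q' - q| ≤ r) (h : |y - p| + 2 * r ≤ |z - q|) : |y - p'| ≤ |z - q'| := by
  have hy : |y - p'| ≤ |y - p| + |p' - p| := by
    simpa only [abs_sub_comm p p'] using abs_sub_le y p p'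
  have hz : |z - q| ≤ |z - q'| + |q' - q| := abs_sub_le z q' q
  linarith

theorem stmt11_general {X : Type*} [TopologicalSpace X] (n : ℕ)
    (α c : ℝ)
    (μfull : X → ℝ → (X →ᵇ ℝ))  -- (x, y) ↦ μ_{β̂_{x,y}}
    (μn : X →ᵇ ℝ)               -- μ_{β̂ₙ}
    (hstab : ∀ (x : X) (y : ℝ), ‖μfull x y - μn‖ ≤ c / 2)
    (Xs : Fin n → X) (Ys : Fin n → ℝ) (x : X) :
    {y : ℝ | α < (↑(Finset.univ.filter (fun i : Fin n =>
        |y - μn x| + c ≤ |Ys i - μn (Xs i)|)).card : ℝ) / n} ⊆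
      {y : ℝ | α < (↑(Finset.univ.filter (fun i : Fin n =>
        |y - μfull x y x| ≤ |Ys i - μfull x y (Xs i)|)).card : ℝ) / n} := by
  intro y (hy : α < _)
  have hclose (z : X) : |μfull x y z - μn z| ≤ c / 2 :=
    ((μfull x y - μn).norm_coe_le_norm z).trans (hstab x y)
  refine hy.trans_le (div_le_div_of_nonneg_right ?_ n.cast_nonneg)
  exact_mod_cast Finset.card_le_card <| Finset.monotone_filter_right _ fun i _ hi =>
    abs_sub_le_abs_sub_of_add_le (hclose x) (hclose (Xs i)) (by linarith)

/-- Deterministic inclusion for the full-conformal region: if the retrained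
predictor `μ_{β̂_{x,y}}` is uniformly within `c_{n+1}/2` (in sup-norm) of the
predictor `μ_{β̂ₙ}` trained on the `n` points alone, then the full-conformal
region contains every `y` for which strictly more than an `α`-fraction of
residuals (computed with `μ_{β̂ₙ}` and margin `c_{n+1}`) are large. -/
theorem stmt11 {X : Type*} [TopologicalSpace X] (n : ℕ) (hn : 0 < n)
    (α c : ℝ)
    (μfull : X → ℝ → (X →ᵇ ℝ))  -- (x, y) ↦ μ_{β̂_{x,y}}
    (μn : X →ᵇ ℝ)               -- μ_{β̂ₙ}
    (hstab : ∀ (x : X) (y : ℝ), ‖μfull x y - μn‖ ≤ c / 2)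
    (Xs : Fin n → X) (Ys : Fin n → ℝ) (x : X) :
    {y : ℝ | α < (↑(Finset.univ.filter (fun i : Fin n =>
        |y - μn x| + c ≤ |Ys i - μn (Xs i)|)).card : ℝ) / n} ⊆
      {y : ℝ | α < (↑(Finset.univ.filter (fun i : Fin n =>
        |y - μfull x y x| ≤ |Ys i - μfull x y (Xs i)|)).card : ℝ) / n} :=
  stmt11_general n α c μfull μn hstab Xs Ys x
end
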